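/- arXiv:1611.04388 — 7 statements merged into one kernel-verified Lean document; each statement's English description precedes it below -/
import Mathlib

section
/- Let ρ₁ be a positive definite density operator on ℂ^d and Δ a nonzero traceless selfadjoint operator. Let λ_min < 0 be the smallest eigenvalue of √(ρ₁⁻¹) Δ √(ρ₁⁻¹). Then ρ₂ = √ρ₁ (I - λ_min⁻¹ √(ρ₁⁻¹) Δ √(ρ₁⁻¹)) √ρ₁ is a density operator with 0 as an eigenvalue, and λ_min (ρ₁ - ρ₂) = Δ. -/
open scoped ComplexOrder
open Matrix

def IsDensity {d : ℕ} (ρ : Matrix (Fin d) (Fin d) ℂ) : Prop :=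
  ρ.PosSemidef ∧ ρ.trace = 1

theorem stmt1 {d : ℕ} (ρ₁ Δ S R : Matrix (Fin d) (Fin d) ℂ) (lam : ℝ)
    (hρ₁ : ρ₁.PosDef) (htrρ : ρ₁.trace = 1)
    (hΔ : Δ.IsHermitian) (htrΔ : Δ.trace = 0) (hΔne : Δ ≠ 0)
    (hS : S.PosSemidef) (hS2 : S * S = ρ₁⁻¹)
    (hR : R.PosSemidef) (hR2 : R * R = ρ₁)
    (hM : (S * Δ * S).IsHermitian)
    (hlam_le : ∀ i, lam ≤ hM.eigenvalues i)
    (hlam_mem : ∃ i, hM.eigenvalues i = lam)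
    (hlam_neg : lam < 0) :
    IsDensity (R * (1 - lam⁻¹ • (S * Δ * S)) * R) ∧
    (∃ v : Fin d → ℂ, v ≠ 0 ∧ (R * (1 - lam⁻¹ • (S * Δ * S)) * R) *ᵥ v = 0) ∧
    lam • (ρ₁ - R * (1 - lam⁻¹ • (S * Δ * S)) * R) = Δ := by
  have hlam_ne : lam ≠ 0 := ne_of_lt hlam_neg
  -- R is positive definite
  have hRd : R.PosDef := by
    refine posDef_iff_dotProduct_mulVec.mpr ⟨hR.1, fun x hx => ?_⟩
    rcases ((posSemidef_iff_dotProduct_mulVec.mp hR).2 x).lt_or_eq with h | h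
    · exact h
    · exfalso
      have hRx : R *ᵥ x = 0 := (hR.dotProduct_mulVec_zero_iff x).mp h.symm
      have : ρ₁ *ᵥ x = 0 := by
        rw [← hR2, ← mulVec_mulVec, hRx, mulVec_zero]
      have h2 := (posDef_iff_dotProduct_mulVec.mp hρ₁).2 hx
      rw [this, dotProduct_zero] at h2
      exact lt_irrefl _ h2
  have hdetR : R.det ≠ 0 := hRd.det_pos.ne'
  -- S = R⁻¹
  have hSR' : S = R⁻¹ := by
    open scoped MatrixOrder in
    refine (CFC.sq_eq_sq_iff S R⁻¹ hS.nonneg hRd.inv.posSemidef.nonneg).mp ?_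
    rw [sq, sq, hS2, ← hR2, Matrix.mul_inv_rev]
  have hRS : R * S = 1 := by rw [hSR', mul_nonsing_inv _ (isUnit_iff_ne_zero.mpr hdetR)]
  have hSR : S * R = 1 := by rw [hSR', nonsing_inv_mul _ (isUnit_iff_ne_zero.mpr hdetR)]
  -- key simplification
  have key : R * (1 - lam⁻¹ • (S * Δ * S)) * R = ρ₁ - lam⁻¹ • Δ := by
    rw [mul_sub, sub_mul, mul_one, hR2, mul_smul_comm, smul_mul_assoc]
    congr 1
    congr 1
    calc R * (S * Δ * S) * R = (R * S) * Δ * (S * R) := by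
          simp only [mul_assoc]
      _ = Δ := by rw [hRS, hSR, one_mul, mul_one]
  -- positive semidefiniteness of 1 - lam⁻¹ • M
  have hA : (1 - lam⁻¹ • (S * Δ * S)).PosSemidef := by
    set U : Matrix (Fin d) (Fin d) ℂ := (hM.eigenvectorUnitary : Matrix (Fin d) (Fin d) ℂ)
    have hU : U * star U = 1 := (Matrix.mem_unitaryGroup_iff).mp hM.eigenvectorUnitary.2
    have hspec := hM.spectral_theorem
    have hone : (1 : Matrix (Fin d) (Fin d) ℂ) = U * 1 * star U := by
      rw [mul_one, hU]
    have hrw : 1 - lam⁻¹ • (S * Δ * S)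
        = U * (diagonal fun i => ((1 - lam⁻¹ * hM.eigenvalues i : ℝ) : ℂ)) * star U := by
      conv_lhs => rw [hspec, Unitary.conjStarAlgAut_apply, hone]
      rw [← smul_mul_assoc, ← mul_smul_comm, ← sub_mul, ← mul_sub]
      congr 2
      ext i j
      rcases eq_or_ne i j with rfl | hij
      · simp [diagonal_apply_eq, Complex.real_smul]
      · simp [diagonal_apply_ne _ hij, one_apply_ne hij]
    rw [hrw]
    have hdiag : (diagonal fun i => ((1 - lam⁻¹ * hM.eigenvalues i : ℝ) : ℂ)).PosSemidef := by
      refine posSemidef_diagonal_iff.mpr fun i => ?_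
      have h1 : hM.eigenvalues i * lam⁻¹ ≤ lam * lam⁻¹ :=
        mul_le_mul_of_nonpos_right (hlam_le i) (inv_nonpos.mpr hlam_neg.le)
      rw [mul_inv_cancel₀ hlam_ne] at h1
      have : (0:ℝ) ≤ 1 - lam⁻¹ * hM.eigenvalues i := by nlinarith
      exact_mod_cast Complex.zero_le_real.mpr this
    rw [Matrix.star_eq_conjTranspose]
    exact hdiag.mul_mul_conjTranspose_same U
  have hPSD : (R * (1 - lam⁻¹ • (S * Δ * S)) * R).PosSemidef := by
    have := hA.conjTranspose_mul_mul_same R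
    rwa [hR.1.eq] at this
  refine ⟨⟨hPSD, ?_⟩, ?_, ?_⟩
  · rw [key, trace_sub, trace_smul, htrΔ, smul_zero, sub_zero, htrρ]
  · obtain ⟨i, hi⟩ := hlam_mem
    set w : Fin d → ℂ := ⇑(hM.eigenvectorBasis i) with hw
    have hwne : w ≠ 0 := by
      have := hM.eigenvectorBasis.orthonormal.ne_zero i
      intro h
      apply this
      ext j
      exact congrFun h j
    refine ⟨S *ᵥ w, ?_, ?_⟩
    · intro h
      apply hwne
      have : (R * S) *ᵥ w = 0 := by
        rw [← mulVec_mulVec, h, mulVec_zero]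
      rwa [hRS, one_mulVec] at this
    · have hMw : (S * Δ * S) *ᵥ w = (lam : ℂ) • w := by
        have := hM.mulVec_eigenvectorBasis i
        rwa [hi] at this
      have hRSw : R *ᵥ (S *ᵥ w) = w := by
        rw [mulVec_mulVec, hRS, one_mulVec]
      rw [← mulVec_mulVec, ← mulVec_mulVec, hRSw, sub_mulVec, one_mulVec,
        smul_mulVec, hMw]
      have hcan : lam⁻¹ • (lam : ℂ) • w = w := by
        ext j
        simp only [Pi.smul_apply, Complex.real_smul, smul_eq_mul, ← mul_assoc]
        norm_cast
        rw [inv_mul_cancel₀ hlam_ne]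
        simp
      rw [hcan, sub_self, mulVec_zero]
  · rw [key, sub_sub_cancel, smul_smul, mul_inv_cancel₀ hlam_ne, one_smul]
end

section
/- Every nonzero traceless selfadjoint operator Δ on ℂ^d can be written as Δ = λ(ρ - σ) where λ ∈ ℝ is nonzero, ρ is a density operator of full rank d (an interior state), and σ is a density operator with 0 as an eigenvalue (a boundary state). -/
open scoped ComplexOrder
open Matrix

theorem stmt2 {d : ℕ} (Δ : Matrix (Fin d) (Fin d) ℂ)
    (hΔ : Δ.IsHermitian) (htr : Δ.trace = 0) (hne : Δ ≠ 0) :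
    ∃ (l : ℝ) (ρ σ : Matrix (Fin d) (Fin d) ℂ),
      l ≠ 0 ∧ IsDensity ρ ∧ ρ.PosDef ∧ IsDensity σ ∧
      (∃ v : Fin d → ℂ, v ≠ 0 ∧ σ *ᵥ v = 0) ∧
      Δ = l • (ρ - σ) := by
  have hd : 0 < d := by
    rcases Nat.eq_zero_or_pos d with h | h
    · subst h; exact absurd (Subsingleton.elim Δ 0) hne
    · exact h
  set U : Matrix (Fin d) (Fin d) ℂ := (hΔ.eigenvectorUnitary : Matrix (Fin d) (Fin d) ℂ)
  set e : Fin d → ℝ := hΔ.eigenvalues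
  have hspec := hΔ.spectral_theorem
  -- sum of eigenvalues is 0
  have hsum : ∑ i, e i = 0 := by
    have h1 : Δ.trace = ∑ i, (e i : ℂ) := by
      conv_lhs => rw [hspec, Unitary.conjStarAlgAut_apply]
      rw [Matrix.trace_mul_cycle, Matrix.mem_unitaryGroup_iff'.mp hΔ.eigenvectorUnitary.2,
        Matrix.one_mul, Matrix.trace_diagonal]
      rfl
    have : (↑(∑ i, e i) : ℂ) = 0 := by push_cast; rw [← h1, htr]
    exact_mod_cast this
  -- some eigenvalue nonzero
  have hex : ∃ i, e i ≠ 0 := by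
    by_contra h
    push_neg at h
    apply hne
    rw [hspec, Unitary.conjStarAlgAut_apply]
    have : (Matrix.diagonal (RCLike.ofReal ∘ e) : Matrix (Fin d) (Fin d) ℂ) = 0 := by
      ext i j
      by_cases hij : i = j <;> simp [Matrix.diagonal, hij, h]
    rw [this, Matrix.mul_zero, Matrix.zero_mul]
  obtain ⟨j0, hj0⟩ := hex
  -- max eigenvalue
  obtain ⟨i0, -, hi0⟩ := Finset.exists_max_image Finset.univ e ⟨j0, Finset.mem_univ j0⟩
  set μ : ℝ := e i0
  have hμpos : 0 < μ := by
    rcases lt_or_ge 0 μ with h | h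
    · exact h
    · exfalso
      have hall : ∀ i, e i = 0 := by
        intro i
        have h1 : e i ≤ 0 := le_trans (hi0 i (Finset.mem_univ i)) h
        have := Finset.sum_eq_zero_iff_of_nonpos (s := Finset.univ) (f := e)
          (fun i _ => le_trans (hi0 i (Finset.mem_univ i)) h)
        exact (this.mp hsum) i (Finset.mem_univ i)
      exact hj0 (hall j0)
  set l : ℝ := d * μ with hl
  have hlpos : 0 < l := mul_pos (by exact_mod_cast hd) hμpos
  have hlne : (l : ℂ) ≠ 0 := by exact_mod_cast hlpos.ne'
  set ρ : Matrix (Fin d) (Fin d) ℂ := ((d : ℂ))⁻¹ • 1 with hρ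
  set σ : Matrix (Fin d) (Fin d) ℂ := ρ - ((l : ℂ))⁻¹ • Δ with hσ
  have hdne : (d : ℂ) ≠ 0 := by exact_mod_cast hd.ne'
  have hρtrace : ρ.trace = 1 := by
    simp [hρ, Matrix.trace_smul, Matrix.trace_one, inv_mul_cancel₀ hdne]
  have hdinvpos : (0:ℂ) < (d:ℂ)⁻¹ := by
    have : (0:ℝ) < (d:ℝ)⁻¹ := by positivity
    have h := (Complex.zero_lt_real (x := (d:ℝ)⁻¹)).mpr this
    rwa [Complex.ofReal_inv, Complex.ofReal_natCast] at h
  have hρpd : ρ.PosDef := by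
    refine Matrix.PosDef.of_dotProduct_mulVec_pos ?_ (fun x hx => ?_)
    · rw [hρ, Matrix.IsHermitian, Matrix.conjTranspose_smul]
      simp
    · rw [hρ, Matrix.smul_mulVec, Matrix.one_mulVec, dotProduct_smul]
      exact mul_pos hdinvpos (Matrix.dotProduct_star_self_pos_iff.mpr hx)
  have hρpsd : ρ.PosSemidef := hρpd.posSemidef
  -- σ as conjugation of diagonal
  have hUU : U * star U = 1 := Matrix.mem_unitaryGroup_iff.mp hΔ.eigenvectorUnitary.2
  have hσdiag : σ = U * Matrix.diagonal (fun i => ((d : ℂ))⁻¹ - (l : ℂ)⁻¹ * (e i : ℂ)) * star U := by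
    have h1 : ρ = U * (((d : ℂ))⁻¹ • 1) * star U := by
      rw [Matrix.mul_smul, Matrix.smul_mul, Matrix.mul_one, hUU]
    rw [hσ, h1]
    conv_lhs => rw [hspec, Unitary.conjStarAlgAut_apply]
    rw [← Matrix.smul_mul, ← Matrix.mul_smul, ← Matrix.sub_mul, ← Matrix.mul_sub]
    congr 1
    congr 1
    ext i j
    by_cases hij : i = j <;> simp [Matrix.diagonal, hij, Matrix.smul_apply, mul_comm] <;> exact Or.inl rfl
  have hentry : ∀ i, (0:ℂ) ≤ ((d : ℂ))⁻¹ - (l : ℂ)⁻¹ * (e i : ℂ) := by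
    intro i
    have h1 : (e i : ℝ) ≤ μ := hi0 i (Finset.mem_univ i)
    have h2 : (l : ℝ)⁻¹ * e i ≤ (d:ℝ)⁻¹ := by
      rw [hl, mul_inv]
      rw [mul_assoc]
      have : μ⁻¹ * e i ≤ 1 := by
        rw [← div_eq_inv_mul, div_le_one hμpos]; exact h1
      calc (d:ℝ)⁻¹ * (μ⁻¹ * e i) ≤ (d:ℝ)⁻¹ * 1 := by
            apply mul_le_mul_of_nonneg_left this (by positivity)
        _ = (d:ℝ)⁻¹ := mul_one _
    have : (0:ℝ) ≤ (d:ℝ)⁻¹ - (l:ℝ)⁻¹ * e i := by linarith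
    have hcast : (((d:ℝ)⁻¹ - (l:ℝ)⁻¹ * e i : ℝ) : ℂ) = ((d : ℂ))⁻¹ - (l : ℂ)⁻¹ * (e i : ℂ) := by
      push_cast; ring
    rw [← hcast]
    exact_mod_cast this
  have hσpsd : σ.PosSemidef := by
    rw [hσdiag]
    exact (Matrix.posSemidef_diagonal_iff.mpr hentry).mul_mul_conjTranspose_same U
  have hσtrace : σ.trace = 1 := by
    simp [hσ, Matrix.trace_sub, Matrix.trace_smul, htr, hρtrace]
  -- kernel vector
  set v : Fin d → ℂ := ⇑(hΔ.eigenvectorBasis i0) with hv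
  have hvne : v ≠ 0 := by simpa [hv] using hΔ.eigenvectorBasis.orthonormal.ne_zero i0
  have hΔv : Δ *ᵥ v = (μ : ℂ) • v := hΔ.mulVec_eigenvectorBasis i0
  have hσv : σ *ᵥ v = 0 := by
    rw [hσ, Matrix.sub_mulVec, Matrix.smul_mulVec, Matrix.smul_mulVec,
      Matrix.one_mulVec, hΔv, smul_smul]
    have : (l:ℂ)⁻¹ * (μ:ℂ) = (d:ℂ)⁻¹ := by
      rw [hl]; push_cast
      field_simp
    rw [this, sub_self]
  refine ⟨l, ρ, σ, hlpos.ne', ⟨hρpsd, hρtrace⟩, hρpd, ⟨hσpsd, hσtrace⟩, ⟨v, hvne, hσv⟩, ?_⟩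
  have h2 : ρ - σ = (l : ℂ)⁻¹ • Δ := by rw [hσ]; abel
  rw [h2]
  ext i j
  simp only [Matrix.smul_apply, Complex.real_smul, smul_eq_mul]
  rw [← mul_assoc, mul_inv_cancel₀ hlne, one_mul]
end

section
/- Let f : S → ℝ be a continuous strictly mid-point convex function on the set S of density operators on ℂ^d, and let ε satisfy min f < ε < max f. Then for every nonzero traceless selfadjoint operator Δ there exist a density operator ρ with f(ρ) ≤ ε and a real number λ such that ρ + λΔ is a density operator with f(ρ + λΔ) > ε. -/
open scoped ComplexOrder
open Matrix

lemma quad_im_zero {d : ℕ} {M : Matrix (Fin d) (Fin d) ℂ} (hM : M.IsHermitian)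
    (x : Fin d → ℂ) : (star x ⬝ᵥ M *ᵥ x).im = 0 := by
  have h : (starRingEnd ℂ) (star x ⬝ᵥ M *ᵥ x) = star x ⬝ᵥ M *ᵥ x := by
    calc (starRingEnd ℂ) (star x ⬝ᵥ M *ᵥ x) = star (star x ⬝ᵥ M *ᵥ x) := rfl
    _ = star (M *ᵥ x) ⬝ᵥ x := by rw [← star_dotProduct]
    _ = (star x ᵥ* Mᴴ) ⬝ᵥ x := by rw [star_mulVec]
    _ = star x ⬝ᵥ Mᴴ *ᵥ x := by rw [← dotProduct_mulVec]
    _ = star x ⬝ᵥ M *ᵥ x := by rw [hM.eq]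
  exact Complex.conj_eq_iff_im.mp h

lemma isHermitian_real_smul {d : ℕ} {M : Matrix (Fin d) (Fin d) ℂ} (hM : M.IsHermitian)
    (r : ℝ) : (r • M).IsHermitian := by
  unfold Matrix.IsHermitian
  rw [conjTranspose_smul, star_trivial, hM.eq]

lemma real_smul_quad {d : ℕ} (M : Matrix (Fin d) (Fin d) ℂ) (r : ℝ) (x : Fin d → ℂ) :
    star x ⬝ᵥ (r • M) *ᵥ x = (r : ℂ) * (star x ⬝ᵥ M *ᵥ x) := by
  rw [smul_mulVec, dotProduct_smul]
  simp [Complex.real_smul]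

lemma quad_vec_smul {d : ℕ} (M : Matrix (Fin d) (Fin d) ℂ) (r : ℝ) (u : Fin d → ℂ) :
    star (r • u) ⬝ᵥ M *ᵥ (r • u) = ((r*r : ℝ)) • (star u ⬝ᵥ M *ᵥ u) := by
  rw [star_smul, star_trivial, mulVec_smul, smul_dotProduct, dotProduct_smul, smul_smul]

lemma posSemidef_real_smul {d : ℕ} {M : Matrix (Fin d) (Fin d) ℂ} (hM : M.PosSemidef)
    {r : ℝ} (hr : 0 ≤ r) : (r • M).PosSemidef := by
  refine .of_dotProduct_mulVec_nonneg (isHermitian_real_smul hM.1 r) fun x => ?_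
  rw [real_smul_quad]
  exact mul_nonneg (by exact_mod_cast hr) (hM.dotProduct_mulVec_nonneg x)

lemma posDef_real_smul {d : ℕ} {M : Matrix (Fin d) (Fin d) ℂ} (hM : M.PosDef)
    {r : ℝ} (hr : 0 < r) : (r • M).PosDef := by
  refine .of_dotProduct_mulVec_pos (isHermitian_real_smul hM.1 r) fun x hx => ?_
  rw [real_smul_quad]
  exact mul_pos (by exact_mod_cast hr) (hM.dotProduct_mulVec_pos hx)

lemma exists_perturb {d : ℕ} {σ Δ : Matrix (Fin d) (Fin d) ℂ} (hσ : σ.PosDef)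
    (hΔ : Δ.IsHermitian) :
    ∃ t : ℝ, 0 < t ∧ ∀ l : ℝ, |l| ≤ t → (σ + l • Δ).PosSemidef := by
  rcases Nat.eq_zero_or_pos d with hd | hd
  · subst hd
    refine ⟨1, one_pos, fun l _ => .of_dotProduct_mulVec_nonneg ((hσ.1).add (isHermitian_real_smul hΔ l)) fun x => ?_⟩
    simp [dotProduct]
  haveI : Nonempty (Fin d) := ⟨⟨0, hd⟩⟩
  have hg : Continuous fun x : Fin d → ℂ => (star x ⬝ᵥ σ *ᵥ x).re := Complex.continuous_re.comp
    (continuous_star.dotProduct (continuous_const.matrix_mulVec continuous_id))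
  have hh : Continuous fun x : Fin d → ℂ => ‖star x ⬝ᵥ Δ *ᵥ x‖ :=
    continuous_norm.comp
    (continuous_star.dotProduct (continuous_const.matrix_mulVec continuous_id))
  have hne : (Metric.sphere (0 : Fin d → ℂ) 1).Nonempty :=
    NormedSpace.sphere_nonempty.mpr (by norm_num)
  obtain ⟨u, hu, hmin⟩ := (isCompact_sphere (0 : Fin d → ℂ) 1).exists_isMinOn hne hg.continuousOn
  obtain ⟨v, hv, hmax⟩ := (isCompact_sphere (0 : Fin d → ℂ) 1).exists_isMaxOn hne hh.continuousOn
  set c := (star u ⬝ᵥ σ *ᵥ u).re with hc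
  set C := ‖star v ⬝ᵥ Δ *ᵥ v‖ with hC
  have hcpos : 0 < c := hσ.re_dotProduct_pos (by
    intro h0
    rw [mem_sphere_iff_norm, h0] at hu
    simp at hu)
  have hCnn : 0 ≤ C := norm_nonneg _
  refine ⟨c / (C + 1), by positivity, fun l hl => ?_⟩
  refine .of_dotProduct_mulVec_nonneg ((hσ.1).add (isHermitian_real_smul hΔ l)) fun x => ?_
  have him : (star x ⬝ᵥ (σ + l • Δ) *ᵥ x).im = 0 :=
    quad_im_zero ((hσ.1).add (isHermitian_real_smul hΔ l)) x
  rw [Complex.le_def]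
  refine ⟨?_, by simp [him]⟩
  rcases eq_or_ne x 0 with rfl | hx
  · simp
  · have hwx : x = ‖x‖ • (‖x‖⁻¹ • x) := by
      rw [smul_smul, mul_inv_cancel₀ (norm_ne_zero_iff.mpr hx), one_smul]
    set w : Fin d → ℂ := ‖x‖⁻¹ • x with hw
    have hws : w ∈ Metric.sphere (0 : Fin d → ℂ) 1 := by
      rw [mem_sphere_iff_norm, sub_zero]
      exact norm_smul_inv_norm hx
    have e1 : star x ⬝ᵥ σ *ᵥ x = ((‖x‖*‖x‖ : ℝ)) • (star w ⬝ᵥ σ *ᵥ w) := by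
      rw [← quad_vec_smul, ← hwx]
    have e2 : star x ⬝ᵥ Δ *ᵥ x = ((‖x‖*‖x‖ : ℝ)) • (star w ⬝ᵥ Δ *ᵥ w) := by
      rw [← quad_vec_smul, ← hwx]
    have hz : star x ⬝ᵥ (σ + l • Δ) *ᵥ x
        = ((‖x‖*‖x‖ : ℝ)) • (star w ⬝ᵥ σ *ᵥ w)
          + (l:ℂ) * (((‖x‖*‖x‖ : ℝ)) • (star w ⬝ᵥ Δ *ᵥ w)) := by
      rw [add_mulVec, dotProduct_add, real_smul_quad, e1, e2]
    rw [hz]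
    have ha : c ≤ (star w ⬝ᵥ σ *ᵥ w).re := hmin hws
    have hb : ‖star w ⬝ᵥ Δ *ᵥ w‖ ≤ C := hmax hws
    have hbre : |(star w ⬝ᵥ Δ *ᵥ w).re| ≤ C :=
      le_trans (Complex.abs_re_le_norm _) hb
    have hiσ := quad_im_zero hσ.1 w
    have hiΔ := quad_im_zero hΔ w
    have hr2 : (0:ℝ) ≤ ‖x‖*‖x‖ := mul_nonneg (norm_nonneg x) (norm_nonneg x)
    simp only [Complex.add_re, Complex.real_smul, Complex.mul_re, Complex.mul_im,
      Complex.ofReal_re, Complex.ofReal_im, Complex.zero_re, hiσ, hiΔ]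
    have hlb : -(c/(C+1)*C) ≤ l * (star w ⬝ᵥ Δ *ᵥ w).re := by
      have h1 : |l * (star w ⬝ᵥ Δ *ᵥ w).re| ≤ c/(C+1)*C := by
        rw [abs_mul]
        exact mul_le_mul hl hbre (abs_nonneg _) (by positivity)
      nlinarith [neg_abs_le (l * (star w ⬝ᵥ Δ *ᵥ w).re)]
    have hdc : c/(C+1)*(C+1) = c := div_mul_cancel₀ _ (by linarith)
    nlinarith [mul_nonneg hr2 (by nlinarith :
      (0:ℝ) ≤ (star w ⬝ᵥ σ *ᵥ w).re + l * (star w ⬝ᵥ Δ *ᵥ w).re), hr2, ha, hlb]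

lemma density_conv {d : ℕ} {A B : Matrix (Fin d) (Fin d) ℂ} (hA : IsDensity A)
    (hB : IsDensity B) {s : ℝ} (h0 : 0 ≤ s) (h1 : s ≤ 1) :
    IsDensity ((1-s) • A + s • B) := by
  refine ⟨(posSemidef_real_smul hA.1 (by linarith)).add (posSemidef_real_smul hB.1 h0), ?_⟩
  rw [trace_add, trace_smul, trace_smul, hA.2, hB.2]
  simp only [smul_eq_mul, Complex.real_smul, mul_one]
  push_cast
  ring

lemma posdef_conv {d : ℕ} {A B : Matrix (Fin d) (Fin d) ℂ} (hA : A.PosSemidef)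
    (hB : B.PosDef) {s : ℝ} (h0 : 0 < s) (h1 : s ≤ 1) :
    ((1-s) • A + s • B).PosDef :=
  Matrix.PosDef.posSemidef_add (posSemidef_real_smul hA (by linarith)) (posDef_real_smul hB h0)

lemma exists_posdef_close {d : ℕ} (f : Matrix (Fin d) (Fin d) ℂ → ℝ)
    (hf_cont : ContinuousOn f {ρ | IsDensity ρ}) {ρ₀ τ : Matrix (Fin d) (Fin d) ℂ}
    (hρ₀ : IsDensity ρ₀) (hτ : IsDensity τ) (hτpd : τ.PosDef) {U : Set ℝ} (hU : IsOpen U)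
    (hfρ₀ : f ρ₀ ∈ U) :
    ∃ a : Matrix (Fin d) (Fin d) ℂ, IsDensity a ∧ a.PosDef ∧ f a ∈ U := by
  set q : ℝ → Matrix (Fin d) (Fin d) ℂ := fun s => (1-s) • ρ₀ + s • τ with hqdef
  have hq0 : q 0 = ρ₀ := by simp [hqdef]
  have hqc : Continuous q := by
    apply Continuous.add
    · exact (continuous_const.sub continuous_id).smul continuous_const
    · exact continuous_id.smul continuous_const
  have hmaps : Set.MapsTo q (Set.Ioc (0:ℝ) 1) {ρ | IsDensity ρ} := fun s hs =>
    density_conv hρ₀ hτ hs.1.le hs.2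
  have hcw : ContinuousWithinAt (f ∘ q) (Set.Ioc (0:ℝ) 1) 0 := by
    refine ContinuousWithinAt.comp ?_ hqc.continuousWithinAt hmaps
    rw [hq0]
    exact hf_cont ρ₀ hρ₀
  haveI : (nhdsWithin (0:ℝ) (Set.Ioc 0 1)).NeBot := by
    apply mem_closure_iff_nhdsWithin_neBot.mp
    rw [closure_Ioc (one_ne_zero).symm]
    exact ⟨le_refl 0, zero_le_one⟩
  have hev : ∀ᶠ s in nhdsWithin (0:ℝ) (Set.Ioc 0 1), f (q s) ∈ U := by
    have : (f ∘ q) 0 ∈ U := by rw [Function.comp_apply, hq0]; exact hfρ₀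
    exact hcw (hU.mem_nhds this)
  obtain ⟨s, hsU, hs⟩ := (hev.and (eventually_mem_nhdsWithin)).exists
  exact ⟨q s, density_conv hρ₀ hτ hs.1.le hs.2,
    posdef_conv hρ₀.1 hτpd hs.1 hs.2, hsU⟩

theorem stmt3 {d : ℕ} (f : Matrix (Fin d) (Fin d) ℂ → ℝ) (ε : ℝ)
    (hf_cont : ContinuousOn f {ρ | IsDensity ρ})
    (hf_conv : ∀ ρ₁ ρ₂, IsDensity ρ₁ → IsDensity ρ₂ → ρ₁ ≠ ρ₂ →
      f ((1/2 : ℝ) • (ρ₁ + ρ₂)) < (f ρ₁ + f ρ₂) / 2)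
    (hmin : sInf (f '' {ρ | IsDensity ρ}) < ε)
    (hmax : ε < sSup (f '' {ρ | IsDensity ρ})) :
    ∀ Δ : Matrix (Fin d) (Fin d) ℂ, Δ.IsHermitian → Δ.trace = 0 → Δ ≠ 0 →
      ∃ (ρ : Matrix (Fin d) (Fin d) ℂ) (l : ℝ), IsDensity ρ ∧ f ρ ≤ ε ∧
        IsDensity (ρ + l • Δ) ∧ ε < f (ρ + l • Δ) := by
  intro Δ hΔh hΔtr hΔ0
  rcases Nat.eq_zero_or_pos d with hd | hd
  · subst hd
    exact absurd (by ext i; exact i.elim0) hΔ0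
  -- the maximally mixed state
  set τ : Matrix (Fin d) (Fin d) ℂ := ((d:ℝ)⁻¹) • 1 with hτdef
  have hdR : ((d:ℝ)) ≠ 0 := Nat.cast_ne_zero.mpr hd.ne'
  have hτpd : τ.PosDef := posDef_real_smul Matrix.PosDef.one (by positivity)
  have hτ : IsDensity τ := by
    refine ⟨hτpd.posSemidef, ?_⟩
    rw [hτdef, trace_smul, trace_one, Fintype.card_fin]
    simp only [smul_eq_mul, Complex.real_smul]
    push_cast
    field_simp
  have hKne : (f '' {ρ | IsDensity ρ}).Nonempty := ⟨f τ, τ, hτ, rfl⟩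
  -- a density matrix with value < ε
  obtain ⟨y₀, ⟨ρ₀, hρ₀, rfl⟩, hy₀⟩ : ∃ y ∈ f '' {ρ | IsDensity ρ}, y < ε := by
    by_cases hb : BddBelow (f '' {ρ | IsDensity ρ})
    · exact (csInf_lt_iff hb hKne).mp hmin
    · obtain ⟨y, hy1, hy2⟩ := not_bddBelow_iff.mp hb ε
      exact ⟨y, hy1, hy2⟩
  -- a density matrix with value > ε
  obtain ⟨y₁, ⟨ρ₁, hρ₁, rfl⟩, hy₁⟩ : ∃ y ∈ f '' {ρ | IsDensity ρ}, ε < y := by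
    by_cases hb : BddAbove (f '' {ρ | IsDensity ρ})
    · exact (lt_csSup_iff hb hKne).mp hmax
    · obtain ⟨y, hy1, hy2⟩ := not_bddAbove_iff.mp hb ε
      exact ⟨y, hy1, hy2⟩
  -- positive definite versions
  obtain ⟨a, haD, haPD, haU⟩ := exists_posdef_close f hf_cont hρ₀ hτ hτpd isOpen_Iio hy₀
  obtain ⟨b, hbD, hbPD, hbU⟩ := exists_posdef_close f hf_cont hρ₁ hτ hτpd isOpen_Ioi hy₁
  -- IVT along the segment from a to b
  set p : ℝ → Matrix (Fin d) (Fin d) ℂ := fun t => (1-t) • a + t • b with hpdef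
  have hp0 : p 0 = a := by simp [hpdef]
  have hp1 : p 1 = b := by simp [hpdef]
  have hpc : Continuous p := by
    apply Continuous.add
    · exact (continuous_const.sub continuous_id).smul continuous_const
    · exact continuous_id.smul continuous_const
  have hpden : ∀ t ∈ Set.Icc (0:ℝ) 1, IsDensity (p t) := fun t ht =>
    density_conv haD hbD ht.1 ht.2
  have hppd : ∀ t ∈ Set.Icc (0:ℝ) 1, (p t).PosDef := by
    intro t ht
    rcases eq_or_lt_of_le ht.1 with h | h
    · rw [← h, hp0]; exact haPD
    · exact posdef_conv haD.1 hbPD h ht.2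
  have hfc : ContinuousOn (f ∘ p) (Set.Icc (0:ℝ) 1) :=
    hf_cont.comp hpc.continuousOn (fun t ht => hpden t ht)
  have hmem : ε ∈ Set.Icc ((f ∘ p) 0) ((f ∘ p) 1) := by
    constructor
    · rw [Function.comp_apply, hp0]; exact (le_of_lt haU)
    · rw [Function.comp_apply, hp1]; exact (le_of_lt hbU)
  obtain ⟨t₀, ht₀, hft₀⟩ := intermediate_value_Icc zero_le_one hfc hmem
  set σ := p t₀ with hσdef
  have hσD : IsDensity σ := hpden t₀ ht₀
  have hσPD : σ.PosDef := hppd t₀ ht₀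
  have hfσ : f σ = ε := hft₀
  -- perturbation
  obtain ⟨t, htpos, ht⟩ := exists_perturb hσPD hΔh
  have htr : ∀ l : ℝ, (σ + l • Δ).trace = 1 := by
    intro l
    rw [trace_add, trace_smul, hΔtr, hσD.2, smul_zero, add_zero]
  have hA : IsDensity (σ + t • Δ) := ⟨ht t (by rw [abs_of_pos htpos]), htr t⟩
  have hB : IsDensity (σ + (-t) • Δ) := ⟨ht (-t) (by rw [abs_neg, abs_of_pos htpos]), htr (-t)⟩
  have hne' : σ + t • Δ ≠ σ + (-t) • Δ := by
    intro h
    have h2 : t • Δ = (-t) • Δ := add_left_cancel h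
    have h3 : ((2*t) : ℝ) • Δ = 0 := by
      have := sub_eq_zero_of_eq h2
      rw [← sub_smul] at this
      convert this using 2
      ring
    have h2t : (2*t : ℝ) ≠ 0 := by positivity
    apply hΔ0
    calc Δ = ((2*t : ℝ)⁻¹ * (2*t)) • Δ := by rw [inv_mul_cancel₀ h2t, one_smul]
    _ = (2*t : ℝ)⁻¹ • (((2*t) : ℝ) • Δ) := by rw [smul_smul]
    _ = 0 := by rw [h3, smul_zero]
  have hmid : (1/2 : ℝ) • ((σ + t • Δ) + (σ + (-t) • Δ)) = σ := by
    module
  have hconv := hf_conv _ _ hA hB hne'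
  rw [hmid, hfσ] at hconv
  rcases le_or_gt (f (σ + t • Δ)) ε with hc | hc
  · refine ⟨σ, -t, hσD, le_of_eq hfσ, hB, ?_⟩
    linarith
  · exact ⟨σ, t, hσD, le_of_eq hfσ, hA, hc⟩
end

section
/- Let f be a continuous strictly mid-point convex function on the density operators of ℂ^d, with min f < ε < max f. Then there exists a full-rank density operator ρ with f(ρ) = ε. -/
open scoped ComplexOrder
open Matrix

lemma psd_rsmul {n : ℕ} {A : Matrix (Fin n) (Fin n) ℂ} {r : ℝ} (hr : 0 ≤ r)
    (hA : A.PosSemidef) : (r • A).PosSemidef := by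
  constructor
  · unfold Matrix.IsHermitian
    rw [conjTranspose_smul, hA.1, star_trivial]
  · intro x
    exact (hA.smul hr).2 x

lemma pd_rsmul {n : ℕ} {A : Matrix (Fin n) (Fin n) ℂ} {r : ℝ} (hr : 0 < r)
    (hA : A.PosDef) : (r • A).PosDef := by
  constructor
  · unfold Matrix.IsHermitian
    rw [conjTranspose_smul, hA.1, star_trivial]
  · intro x hx
    exact (hA.smul hr).2 hx

lemma dens_comb {n : ℕ} {ρ₁ ρ₂ : Matrix (Fin n) (Fin n) ℂ} {t : ℝ}
    (h1 : IsDensity ρ₁) (h2 : IsDensity ρ₂) (ht : t ∈ Set.Icc (0:ℝ) 1) :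
    IsDensity ((1 - t) • ρ₁ + t • ρ₂) := by
  constructor
  · exact (psd_rsmul (by linarith [ht.2]) h1.1).add (psd_rsmul ht.1 h2.1)
  · rw [trace_add, trace_smul, trace_smul, h1.2, h2.2]
    simp [Complex.real_smul]

lemma comb_cont {n : ℕ} (ρ₁ ρ₂ : Matrix (Fin n) (Fin n) ℂ) :
    Continuous (fun t : ℝ => (1 - t) • ρ₁ + t • ρ₂) := by
  fun_prop

lemma pd_comb {n : ℕ} {ρ₁ ρ₂ : Matrix (Fin n) (Fin n) ℂ} {t : ℝ}
    (h1 : ρ₁.PosDef) (h2 : ρ₂.PosDef) (ht : t ∈ Set.Icc (0:ℝ) 1) :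
    ((1 - t) • ρ₁ + t • ρ₂).PosDef := by
  rcases eq_or_lt_of_le ht.1 with h | h
  · simp only [← h, sub_zero, one_smul, zero_smul, add_zero]
    exact h1
  · exact Matrix.PosDef.posSemidef_add (psd_rsmul (by linarith [ht.2]) h1.posSemidef)
      (pd_rsmul h h2)

/-- Near a density state with `f < ε` there is a full-rank density state with `f < ε`. -/
lemma near_lt {n : ℕ} (f : Matrix (Fin n) (Fin n) ℂ → ℝ) (ε : ℝ)
    (hf_cont : ContinuousOn f {ρ | IsDensity ρ})
    {ρ σ : Matrix (Fin n) (Fin n) ℂ} (hρ : IsDensity ρ) (hσ : IsDensity σ)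
    (hσpd : σ.PosDef) (h : f ρ < ε) :
    ∃ τ, IsDensity τ ∧ τ.PosDef ∧ f τ < ε := by
  set g : ℝ → Matrix (Fin n) (Fin n) ℂ := fun t => (1 - t) • ρ + t • σ with hg
  have hmaps : Set.MapsTo g (Set.Icc (0:ℝ) 1) {ρ | IsDensity ρ} :=
    fun t ht => dens_comb hρ hσ ht
  have hcont : ContinuousOn (f ∘ g) (Set.Icc (0:ℝ) 1) :=
    hf_cont.comp (comb_cont ρ σ).continuousOn hmaps
  have h0 : g 0 = ρ := by simp [hg]
  have hc0 : ContinuousWithinAt (f ∘ g) (Set.Icc (0:ℝ) 1) 0 :=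
    hcont 0 ⟨le_refl 0, zero_le_one⟩
  have hev : ∀ᶠ t in nhdsWithin 0 (Set.Icc (0:ℝ) 1), f (g t) < ε := by
    have : f (g 0) < ε := by rwa [h0]
    exact hc0 (Iio_mem_nhds this)
  have hev' : ∀ᶠ t in nhdsWithin 0 (Set.Ioc (0:ℝ) 1), f (g t) < ε :=
    hev.filter_mono (nhdsWithin_mono _ Set.Ioc_subset_Icc_self)
  have hne : (nhdsWithin (0:ℝ) (Set.Ioc (0:ℝ) 1)).NeBot :=
    left_nhdsWithin_Ioc_neBot zero_lt_one
  have hmem : ∀ᶠ t in nhdsWithin (0:ℝ) (Set.Ioc (0:ℝ) 1), t ∈ Set.Ioc (0:ℝ) 1 :=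
    self_mem_nhdsWithin
  obtain ⟨t, htf, ht⟩ := (hev'.and hmem).exists
  exact ⟨g t, dens_comb hρ hσ ⟨le_of_lt ht.1, ht.2⟩,
    Matrix.PosDef.posSemidef_add (psd_rsmul (by linarith [ht.2]) hρ.1)
      (pd_rsmul ht.1 hσpd), htf⟩

theorem stmt4 {d : ℕ} (f : Matrix (Fin d) (Fin d) ℂ → ℝ) (ε : ℝ)
    (hf_cont : ContinuousOn f {ρ | IsDensity ρ})
    (hf_conv : ∀ ρ₁ ρ₂, IsDensity ρ₁ → IsDensity ρ₂ → ρ₁ ≠ ρ₂ →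
      f ((1/2 : ℝ) • (ρ₁ + ρ₂)) < (f ρ₁ + f ρ₂) / 2)
    (hmin : sInf (f '' {ρ | IsDensity ρ}) < ε)
    (hmax : ε < sSup (f '' {ρ | IsDensity ρ})) :
    ∃ ρ : Matrix (Fin d) (Fin d) ℂ, IsDensity ρ ∧ ρ.PosDef ∧ f ρ = ε := by
  set S := f '' {ρ | IsDensity ρ} with hS
  have hSne : S.Nonempty := by
    rcases S.eq_empty_or_nonempty with h | h
    · rw [h] at hmin hmax
      simp [Real.sInf_empty, Real.sSup_empty] at hmin hmax
      linarith
    · exact h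
  have h1 : ∃ x ∈ S, x < ε := by
    by_contra hc
    push_neg at hc
    exact absurd (le_csInf hSne hc) (not_le.mpr hmin)
  have h2 : ∃ x ∈ S, ε < x := by
    by_contra hc
    push_neg at hc
    exact absurd (csSup_le hSne hc) (not_le.mpr hmax)
  obtain ⟨x₁, ⟨ρ₁, hρ₁, rfl⟩, hx1⟩ := h1
  obtain ⟨x₂, ⟨ρ₂, hρ₂, rfl⟩, hx2⟩ := h2
  -- d ≠ 0
  have hd : 0 < d := by
    rcases Nat.eq_zero_or_pos d with h | h
    · exfalso
      have : ρ₁.trace = 0 := by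
        subst h
        simp [Matrix.trace]
      rw [hρ₁.2] at this
      exact one_ne_zero this
    · exact h
  -- maximally mixed state
  set σ : Matrix (Fin d) (Fin d) ℂ := ((d : ℝ)⁻¹) • (1 : Matrix (Fin d) (Fin d) ℂ) with hσdef
  have hdR : (0:ℝ) < (d:ℝ) := by exact_mod_cast hd
  have hσpd : σ.PosDef := pd_rsmul (by positivity) (Matrix.PosDef.one)
  have hσ : IsDensity σ := by
    constructor
    · exact hσpd.posSemidef
    · rw [hσdef, trace_smul, trace_one]
      simp [Complex.real_smul]
      field_simp
  obtain ⟨τ₁, hτ₁, hτ₁pd, hfτ₁⟩ := near_lt f ε hf_cont hρ₁ hσ hσpd hx1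
  obtain ⟨τ₂, hτ₂, hτ₂pd, hfτ₂⟩ := near_lt (fun ρ => -f ρ) (-ε) (hf_cont.neg) hρ₂ hσ hσpd
    (by simpa using hx2)
  have hfτ₂' : ε < f τ₂ := by simpa using hfτ₂
  -- IVT along the segment from τ₁ to τ₂
  set g : ℝ → Matrix (Fin d) (Fin d) ℂ := fun t => (1 - t) • τ₁ + t • τ₂ with hg
  have hmaps : Set.MapsTo g (Set.Icc (0:ℝ) 1) {ρ | IsDensity ρ} :=
    fun t ht => dens_comb hτ₁ hτ₂ ht
  have hcont : ContinuousOn (f ∘ g) (Set.Icc (0:ℝ) 1) :=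
    hf_cont.comp (comb_cont τ₁ τ₂).continuousOn hmaps
  have hsub := intermediate_value_Icc (zero_le_one) hcont
  have h0 : g 0 = τ₁ := by simp [hg]
  have h1' : g 1 = τ₂ := by simp [hg]
  have hε : ε ∈ Set.Icc ((f ∘ g) 0) ((f ∘ g) 1) := by
    simp only [Function.comp, h0, h1']
    exact ⟨le_of_lt hfτ₁, le_of_lt hfτ₂'⟩
  obtain ⟨t, ht, htf⟩ := hsub hε
  exact ⟨g t, dens_comb hτ₁ hτ₂ ht, pd_comb hτ₁pd hτ₂pd ht, htf⟩
end

section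
/- Fix a qubit state ρ_r and define f(ρ) = ‖ρ - ρ_r‖₁². Then f is strictly mid-point convex on the set of qubit density operators: for all distinct qubit states ρ₁, ρ₂, f((ρ₁+ρ₂)/2) < (f(ρ₁)+f(ρ₂))/2. -/
open scoped ComplexOrder
open Matrix

/-- The positive semidefinite square root (junk value `0` off the PSD cone). -/
noncomputable def matSqrt {d : ℕ} (A : Matrix (Fin d) (Fin d) ℂ) :
    Matrix (Fin d) (Fin d) ℂ :=
  by classical exact if h : A.PosSemidef then
    ((h.1.eigenvectorUnitary : Matrix (Fin d) (Fin d) ℂ) *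
      Matrix.diagonal (fun i => ((Real.sqrt (h.1.eigenvalues i) : ℝ) : ℂ)) *
      (star h.1.eigenvectorUnitary : Matrix (Fin d) (Fin d) ℂ)) else 0

/-- The trace norm `‖A‖₁ = tr √(AᴴA)`. -/
noncomputable def traceNorm {d : ℕ} (A : Matrix (Fin d) (Fin d) ℂ) : ℝ :=
  ((matSqrt (Aᴴ * A)).trace).re

/-- For a scalar nonnegative multiple of the identity, `matSqrt` is explicit. -/
lemma matSqrt_smul_one (c : ℝ) (hc : 0 ≤ c) :
    matSqrt ((c : ℂ) • (1 : Matrix (Fin 2) (Fin 2) ℂ)) =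
      ((Real.sqrt c : ℝ) : ℂ) • (1 : Matrix (Fin 2) (Fin 2) ℂ) := by
  have hpsd : ((c : ℂ) • (1 : Matrix (Fin 2) (Fin 2) ℂ)).PosSemidef := by
    rw [smul_one_eq_diagonal]
    exact Matrix.PosSemidef.diagonal fun _ => Complex.zero_le_real.mpr hc
  have hBpsd : (((Real.sqrt c : ℝ) : ℂ) • (1 : Matrix (Fin 2) (Fin 2) ℂ)).PosSemidef := by
    rw [smul_one_eq_diagonal]
    exact Matrix.PosSemidef.diagonal fun _ => Complex.zero_le_real.mpr (Real.sqrt_nonneg c)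
  have hsq : (((Real.sqrt c : ℝ) : ℂ) • (1 : Matrix (Fin 2) (Fin 2) ℂ)) ^ 2 =
      (c : ℂ) • (1 : Matrix (Fin 2) (Fin 2) ℂ) := by
    rw [smul_pow, one_pow, ← Complex.ofReal_pow, Real.sq_sqrt hc]
  rw [matSqrt, dif_pos hpsd]
  have hd := hpsd.1.conjStarAlgAut_star_eigenvectorUnitary
  rw [map_smul, map_one] at hd
  have hev : ∀ i, hpsd.1.eigenvalues i = c := by
    intro i
    have := congrFun (congrFun hd i) i
    simp only [Matrix.smul_apply, Matrix.one_apply_eq, smul_eq_mul, mul_one,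
      Matrix.diagonal_apply_eq, Function.comp_apply] at this
    exact Complex.ofReal_injective this.symm
  have hU : (hpsd.1.eigenvectorUnitary : Matrix (Fin 2) (Fin 2) ℂ) *
      (star hpsd.1.eigenvectorUnitary : Matrix (Fin 2) (Fin 2) ℂ) = 1 :=
    Unitary.coe_mul_star_self _
  simp only [hev]
  rw [← smul_one_eq_diagonal, Matrix.mul_smul, mul_one, Matrix.smul_mul, hU]

/-- Key computation: for a Hermitian traceless `2 × 2` matrix,
`‖A‖₁² = 2 tr(AᴴA)` (the squared Frobenius norm, up to factor 2). -/
lemma traceNorm_sq_eq (A : Matrix (Fin 2) (Fin 2) ℂ) (hH : A.IsHermitian)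
    (htr : A.trace = 0) :
    traceNorm A ^ 2 = 2 * ((Aᴴ * A).trace).re := by
  -- entries facts
  have h11 : A 1 1 = - A 0 0 := by
    have := htr
    simp only [Matrix.trace, Matrix.diag, Fin.sum_univ_two] at this
    linear_combination this
  have h10 : A 1 0 = starRingEnd ℂ (A 0 1) := by
    have := congrFun (congrFun hH.eq 1) 0
    simpa [Matrix.conjTranspose_apply] using this.symm
  have h00 : starRingEnd ℂ (A 0 0) = A 0 0 := by
    have := congrFun (congrFun hH.eq 0) 0
    simpa [Matrix.conjTranspose_apply] using this
  set c : ℝ := Complex.normSq (A 0 0) + Complex.normSq (A 0 1) with hc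
  have hc0 : 0 ≤ c := add_nonneg (Complex.normSq_nonneg _) (Complex.normSq_nonneg _)
  have hAA : Aᴴ * A = (c : ℂ) • (1 : Matrix (Fin 2) (Fin 2) ℂ) := by
    rw [hH.eq]
    ext i j
    fin_cases i <;> fin_cases j <;>
      simp only [Matrix.mul_apply, Fin.sum_univ_two, Matrix.smul_apply, Matrix.one_apply,
        Fin.zero_eta, Fin.mk_one, smul_eq_mul, if_true, if_false, mul_one, mul_zero,
        zero_ne_one, one_ne_zero, ite_true, ite_false, reduceIte]
    · rw [h10, hc]
      push_cast
      linear_combination (-(A 0 0)) * h00 + Complex.mul_conj (A 0 0) + Complex.mul_conj (A 0 1)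
    · rw [h11]; ring
    · rw [h11]; ring
    · rw [h10, h11, hc]
      push_cast
      linear_combination (-(A 0 0)) * h00 + Complex.mul_conj (A 0 0) + Complex.mul_conj (A 0 1)
  rw [traceNorm, hAA, matSqrt_smul_one c hc0]
  have htr1 : ((1 : Matrix (Fin 2) (Fin 2) ℂ)).trace = 2 := by
    simp [Matrix.trace, Fin.sum_univ_two]
  rw [Matrix.trace_smul, Matrix.trace_smul, htr1]
  simp only [smul_eq_mul]
  rw [show ((Real.sqrt c : ℝ) : ℂ) * 2 = ((2 * Real.sqrt c : ℝ) : ℂ) by push_cast; ring,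
    show ((c : ℝ) : ℂ) * 2 = ((2 * c : ℝ) : ℂ) by push_cast; ring]
  rw [Complex.ofReal_re, Complex.ofReal_re]
  have : Real.sqrt c ^ 2 = c := Real.sq_sqrt hc0
  nlinarith [Real.sqrt_nonneg c]

/-- The Frobenius quadratic form is positive on nonzero matrices. -/
lemma trace_conj_mul_self_pos (C : Matrix (Fin 2) (Fin 2) ℂ) (hC : C ≠ 0) :
    0 < ((Cᴴ * C).trace).re := by
  have hform : ((Cᴴ * C).trace).re =
      Complex.normSq (C 0 0) + Complex.normSq (C 1 0) +
      (Complex.normSq (C 0 1) + Complex.normSq (C 1 1)) := by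
    simp [Matrix.trace, Matrix.diag, Matrix.mul_apply, Fin.sum_univ_two,
      Matrix.conjTranspose_apply, ← Complex.normSq_eq_conj_mul_self]
  rw [hform]
  by_contra h
  push_neg at h
  have h00 := Complex.normSq_nonneg (C 0 0)
  have h10 := Complex.normSq_nonneg (C 1 0)
  have h01 := Complex.normSq_nonneg (C 0 1)
  have h11 := Complex.normSq_nonneg (C 1 1)
  apply hC
  ext i j
  fin_cases i <;> fin_cases j <;>
    simp only [Matrix.zero_apply, Fin.zero_eta, Fin.mk_one] <;>
    rw [← Complex.normSq_eq_zero] <;> nlinarith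

theorem stmt8 (ρr : Matrix (Fin 2) (Fin 2) ℂ) (hρr : IsDensity ρr)
    (ρ₁ ρ₂ : Matrix (Fin 2) (Fin 2) ℂ)
    (h1 : IsDensity ρ₁) (h2 : IsDensity ρ₂) (hne : ρ₁ ≠ ρ₂) :
    traceNorm ((1/2 : ℝ) • (ρ₁ + ρ₂) - ρr) ^ 2 <
      (traceNorm (ρ₁ - ρr) ^ 2 + traceNorm (ρ₂ - ρr) ^ 2) / 2 := by
  set a := ρ₁ - ρr with ha
  set b := ρ₂ - ρr with hb
  set M := (1/2 : ℝ) • (ρ₁ + ρ₂) - ρr with hM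
  have haH : a.IsHermitian := h1.1.1.sub hρr.1.1
  have hbH : b.IsHermitian := h2.1.1.sub hρr.1.1
  have hMH : M.IsHermitian := by
    have : ((1/2 : ℝ) • (ρ₁ + ρ₂)).IsHermitian := by
      unfold Matrix.IsHermitian
      rw [Matrix.conjTranspose_smul, (h1.1.1.add h2.1.1).eq]
      simp
    exact this.sub hρr.1.1
  have hatr : a.trace = 0 := by rw [ha, Matrix.trace_sub, h1.2, hρr.2, sub_self]
  have hbtr : b.trace = 0 := by rw [hb, Matrix.trace_sub, h2.2, hρr.2, sub_self]
  have hMtr : M.trace = 0 := by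
    rw [hM, Matrix.trace_sub, Matrix.trace_smul, Matrix.trace_add, h1.2, h2.2, hρr.2]
    norm_num
  have hMab : M = (1/2 : ℝ) • (a + b) := by
    rw [ha, hb, hM]; module
  -- parallelogram identity at the level of traces
  have hexp : (aᴴ * a).trace + (bᴴ * b).trace =
      ((a + b)ᴴ * (a + b)).trace + ((a - b)ᴴ * (a - b)).trace - (aᴴ * a).trace - (bᴴ * b).trace := by
    simp only [Matrix.conjTranspose_add, Matrix.conjTranspose_sub, Matrix.add_mul,
      Matrix.sub_mul, Matrix.mul_add, Matrix.mul_sub, Matrix.trace_add, Matrix.trace_sub]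
    ring
  have hMM : (Mᴴ * M).trace = ((1/4 : ℝ) : ℂ) * ((a + b)ᴴ * (a + b)).trace := by
    rw [hMab, Matrix.conjTranspose_smul, Matrix.smul_mul, Matrix.mul_smul, Matrix.trace_smul,
      Matrix.trace_smul]
    rw [star_trivial]
    rw [smul_smul]
    rw [show ((1/2 : ℝ) * (1/2 : ℝ)) = (1/4 : ℝ) by norm_num]
    rw [Complex.real_smul]
  have hab : a - b = ρ₁ - ρ₂ := by rw [ha, hb]; abel
  have hDpos : 0 < (((a - b)ᴴ * (a - b)).trace).re := by
    rw [hab]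
    exact trace_conj_mul_self_pos _ (sub_ne_zero.mpr hne)
  rw [traceNorm_sq_eq a haH hatr, traceNorm_sq_eq b hbH hbtr, traceNorm_sq_eq M hMH hMtr]
  have hre : ((Mᴴ * M).trace).re = (1/4 : ℝ) * (((a + b)ᴴ * (a + b)).trace).re := by
    rw [hMM]
    rw [Complex.mul_re]
    simp
  have hre2 : (((a + b)ᴴ * (a + b)).trace).re =
      2 * ((aᴴ * a).trace).re + 2 * ((bᴴ * b).trace).re - (((a - b)ᴴ * (a - b)).trace).re := by
    have := congrArg Complex.re hexp
    simp only [Complex.add_re, Complex.sub_re] at this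
    linarith
  rw [hre, hre2]
  linarith
end

section
/- Every nonzero traceless selfadjoint 3×3 matrix Δ can be written as Δ = λ(π - ρ) for some λ ∈ ℝ, a rank-one projection π, and a density matrix ρ. -/
open scoped ComplexOrder
open Matrix

/-- A pure state: a rank-one orthogonal projection. -/
def IsPureProjection {d : ℕ} (π : Matrix (Fin d) (Fin d) ℂ) : Prop :=
  π.IsHermitian ∧ π * π = π ∧ π.rank = 1

lemma aux2 (a b c : ℝ) (hsum : a + b + c = 0) (hc : c ^ 2 ≤ b ^ 2) : a * b ≤ 0 := by
  have hc' : c = -a - b := by linarith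
  rw [hc'] at hc
  nlinarith [sq_nonneg a]

lemma aux_sign (f : Fin 3 → ℝ) (k i : Fin 3) (hik : i ≠ k)
    (hsum : f 0 + f 1 + f 2 = 0)
    (h0 : f 0 ^ 2 ≤ f k ^ 2) (h1 : f 1 ^ 2 ≤ f k ^ 2) (h2 : f 2 ^ 2 ≤ f k ^ 2) :
    f i * f k ≤ 0 := by
  fin_cases i <;> fin_cases k
  · exact absurd rfl hik
  · exact aux2 (f 0) (f 1) (f 2) (by linarith) h2
  · exact aux2 (f 0) (f 2) (f 1) (by linarith) h1
  · exact aux2 (f 1) (f 0) (f 2) (by linarith) h2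
  · exact absurd rfl hik
  · exact aux2 (f 1) (f 2) (f 0) (by linarith) h0
  · exact aux2 (f 2) (f 0) (f 1) (by linarith) h1
  · exact aux2 (f 2) (f 1) (f 0) (by linarith) h0
  · exact absurd rfl hik

theorem stmt15 (Δ : Matrix (Fin 3) (Fin 3) ℂ)
    (hΔ : Δ.IsHermitian) (htr : Δ.trace = 0) (hne : Δ ≠ 0) :
    ∃ (l : ℝ) (π ρ : Matrix (Fin 3) (Fin 3) ℂ),
      IsPureProjection π ∧ IsDensity ρ ∧ Δ = l • (π - ρ) := by
  classical
  set U : Matrix (Fin 3) (Fin 3) ℂ := (hΔ.eigenvectorUnitary : Matrix (Fin 3) (Fin 3) ℂ)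
    with hUdef
  have hsU : star U * U = 1 := Unitary.coe_star_mul_self hΔ.eigenvectorUnitary
  have hUs : U * star U = 1 := Unitary.coe_mul_star_self hΔ.eigenvectorUnitary
  have hUdet : IsUnit U.det := by
    refine (Matrix.isUnit_iff_isUnit_det U).mp ?_
    exact ⟨Unitary.toUnits (hΔ.eigenvectorUnitary), rfl⟩
  have hUsdet : IsUnit (star U).det := by
    refine (Matrix.isUnit_iff_isUnit_det (star U)).mp ?_
    exact isUnit_star.mpr ⟨Unitary.toUnits (hΔ.eigenvectorUnitary), rfl⟩
  set μ : Fin 3 → ℝ := hΔ.eigenvalues with hμdef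
  -- general helpers for conjugated diagonals
  set C : (Fin 3 → ℝ) → Matrix (Fin 3) (Fin 3) ℂ :=
    fun d => U * diagonal (Complex.ofReal ∘ d) * star U with hCdef
  have hspec : Δ = C μ := hΔ.spectral_theorem
  have hCtr : ∀ d, (C d).trace = Complex.ofReal (∑ i, d i) := by
    intro d
    simp only [hCdef]
    rw [Matrix.trace_mul_cycle, hsU, one_mul, Matrix.trace_diagonal]
    push_cast
    rfl
  have hDherm : ∀ d : Fin 3 → ℝ,
      (diagonal (Complex.ofReal ∘ d))ᴴ = diagonal (Complex.ofReal ∘ d) := by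
    intro d
    rw [diagonal_conjTranspose]
    have h : star (Complex.ofReal ∘ d) = Complex.ofReal ∘ d := by
      funext i
      simp [Pi.star_apply, Function.comp_apply, Complex.conj_ofReal, RCLike.star_def]
    rw [h]
  have hCherm : ∀ d, (C d).IsHermitian := by
    intro d
    simp only [hCdef, Matrix.IsHermitian, conjTranspose_mul, star_eq_conjTranspose,
      conjTranspose_conjTranspose, hDherm d, mul_assoc]
  have hCmul : ∀ d e, C d * C e = C (d * e) := by
    intro d e
    simp only [hCdef]
    rw [mul_assoc, mul_assoc, ← mul_assoc (star U), ← mul_assoc (star U), hsU, one_mul,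
      ← mul_assoc, ← mul_assoc, mul_assoc U, diagonal_mul_diagonal,
      show (fun i => (Complex.ofReal ∘ d) i * (Complex.ofReal ∘ e) i)
          = Complex.ofReal ∘ (d * e) from funext fun i => by simp [Function.comp]]
  -- trace of Δ gives sum of eigenvalues zero
  have hsum : ∑ i, μ i = 0 := by
    have := hCtr μ
    rw [← hspec, htr] at this
    exact_mod_cast this.symm
  -- choose eigenvalue of maximal absolute value
  obtain ⟨k, -, hk⟩ := Finset.exists_max_image Finset.univ (fun i => |μ i|) ⟨0, Finset.mem_univ 0⟩
  have hk' : ∀ i, |μ i| ≤ |μ k| := fun i => hk i (Finset.mem_univ i)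
  have hlne : μ k ≠ 0 := by
    intro h0
    apply hne
    have hall : μ = 0 := by
      funext i
      have := hk' i
      rw [h0, abs_zero] at this
      exact abs_nonpos_iff.mp this
    rw [hspec]
    simp only [hCdef, hall]
    have h : diagonal (0 : Fin 3 → ℂ) = 0 := by ext i j; simp [diagonal_apply]
    simp [Pi.comp_zero, h]
  have hsq : ∀ i, μ i ^ 2 ≤ μ k ^ 2 := fun i => by
    have := hk' i; nlinarith [abs_nonneg (μ i), sq_abs (μ i), sq_abs (μ k)]
  have hsign : ∀ i, i ≠ k → μ i * μ k ≤ 0 := by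
    intro i hik
    refine aux_sign μ k i hik ?_ (hsq 0) (hsq 1) (hsq 2)
    have := hsum
    rwa [Fin.sum_univ_three] at this
  -- define diagonal data
  set p : Fin 3 → ℝ := fun i => if i = k then 1 else 0 with hpdef
  set r : Fin 3 → ℝ := fun i => p i - μ i / μ k with hrdef
  have hrnonneg : ∀ i, 0 ≤ r i := by
    intro i
    simp only [hrdef, hpdef]
    by_cases h : i = k
    · subst h
      rw [if_pos rfl, div_self hlne]
      norm_num
    · rw [if_neg h]
      have h2 : μ i / μ k = (μ i * μ k) / μ k ^ 2 := by
        field_simp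
      have h3 : (μ i * μ k) / μ k ^ 2 ≤ 0 :=
        div_nonpos_of_nonpos_of_nonneg (hsign i h) (sq_nonneg (μ k))
      rw [h2]
      linarith
  refine ⟨μ k, C p, C r, ⟨hCherm p, ?_, ?_⟩, ⟨?_, ?_⟩, ?_⟩
  · have hpp : p * p = p := by
      funext i
      by_cases h : i = k <;> simp [hpdef, h]
    rw [hCmul, hpp]
  · -- rank
    simp only [hCdef]
    rw [mul_assoc, rank_mul_eq_right_of_isUnit_det U _ hUdet,
      rank_mul_eq_left_of_isUnit_det _ _ hUsdet, rank_diagonal]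
    have hiff : ∀ i : Fin 3, (Complex.ofReal ∘ p) i ≠ 0 ↔ i = k := by
      intro i
      by_cases h : i = k <;> simp [hpdef, h]
    rw [Fintype.card_congr (Equiv.subtypeEquivRight hiff)]
    exact Fintype.card_subtype_eq k
  · -- PSD
    simp only [hCdef]
    exact (Matrix.posSemidef_diagonal_iff.mpr fun i =>
      Complex.zero_le_real.mpr (hrnonneg i)).mul_mul_conjTranspose_same U
  · -- trace = 1
    rw [hCtr]
    have hh : ∑ i, r i = 1 := by
      simp only [hrdef]
      rw [Finset.sum_sub_distrib, ← Finset.sum_div, hsum, zero_div, sub_zero]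
      simp [hpdef]
    rw [hh, Complex.ofReal_one]
  · -- Δ = l • (C p - C r)
    have hkc : (μ k : ℂ) ≠ 0 := Complex.ofReal_ne_zero.mpr hlne
    have hD : (diagonal (Complex.ofReal ∘ μ) : Matrix (Fin 3) (Fin 3) ℂ)
        = (μ k : ℝ) • (diagonal (Complex.ofReal ∘ p) - diagonal (Complex.ofReal ∘ r)) := by
      rw [diagonal_sub, ← diagonal_smul]
      refine congrArg diagonal (funext fun i => ?_)
      simp only [Pi.smul_apply, Pi.sub_apply, Function.comp_apply, hrdef, hpdef]
      rw [Complex.real_smul]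
      push_cast
      field_simp
      ring
    rw [hspec]
    simp only [hCdef]
    rw [hD, Matrix.mul_smul, Matrix.smul_mul, Matrix.mul_sub, Matrix.sub_mul]
end

section
/- Let d ≥ 2 and let r be an integer with ⌊d/2⌋ ≤ r ≤ d - 1. Then for every nonzero traceless selfadjoint operator Δ on ℂ^d there exist a density operator ρ with rank ρ > r and λ ∈ ℝ such that ρ + λΔ is a density operator with rank(ρ + λΔ) ≤ r. -/
open scoped ComplexOrder
open Matrix

section glue
variable {d : ℕ} {Δ : Matrix (Fin d) (Fin d) ℂ} (hΔ : Δ.IsHermitian)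

noncomputable def Fmat (hΔ : Δ.IsHermitian) (w : Fin d → ℝ) : Matrix (Fin d) (Fin d) ℂ :=
  (hΔ.eigenvectorUnitary : Matrix (Fin d) (Fin d) ℂ) * diagonal (RCLike.ofReal ∘ w) *
    star (hΔ.eigenvectorUnitary : Matrix (Fin d) (Fin d) ℂ)

lemma Fmat_spec : Δ = Fmat hΔ hΔ.eigenvalues := hΔ.spectral_theorem

lemma Fmat_trace (w : Fin d → ℝ) : (Fmat hΔ w).trace = ((∑ i, w i : ℝ) : ℂ) := by
  rw [Fmat, trace_mul_cycle,
    Matrix.mem_unitaryGroup_iff'.mp (hΔ.eigenvectorUnitary).2, one_mul, trace_diagonal]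
  push_cast
  rfl

lemma Fmat_posSemidef {w : Fin d → ℝ} (hw : ∀ i, 0 ≤ w i) : (Fmat hΔ w).PosSemidef := by
  have h : (diagonal (RCLike.ofReal ∘ w : Fin d → ℂ) : Matrix (Fin d) (Fin d) ℂ).PosSemidef := by
    refine posSemidef_diagonal_iff.mpr fun i => ?_
    show (0 : ℂ) ≤ RCLike.ofReal (w i)
    exact RCLike.ofReal_nonneg.mpr (hw i)
  exact h.mul_mul_conjTranspose_same _

lemma Fmat_rank (w : Fin d → ℝ) :
    (Fmat hΔ w).rank = (Finset.univ.filter fun i => w i ≠ 0).card := by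
  classical
  have hU : IsUnit ((hΔ.eigenvectorUnitary : Matrix (Fin d) (Fin d) ℂ)).det := by
    apply IsUnit.of_mul_eq_one (star (hΔ.eigenvectorUnitary : Matrix (Fin d) (Fin d) ℂ)).det
    rw [← det_mul, Matrix.mem_unitaryGroup_iff.mp (hΔ.eigenvectorUnitary).2, det_one]
  have hUs : IsUnit (star (hΔ.eigenvectorUnitary : Matrix (Fin d) (Fin d) ℂ)).det := by
    apply IsUnit.of_mul_eq_one ((hΔ.eigenvectorUnitary : Matrix (Fin d) (Fin d) ℂ)).det
    rw [← det_mul, Matrix.mem_unitaryGroup_iff'.mp (hΔ.eigenvectorUnitary).2, det_one]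
  rw [Fmat, rank_mul_eq_left_of_isUnit_det _ _ hUs, rank_mul_eq_right_of_isUnit_det _ _ hU,
    rank_diagonal, Fintype.card_subtype]
  congr 1
  apply Finset.filter_congr
  intro i _
  simp [Function.comp, RCLike.ofReal_eq_zero]

lemma Fmat_add_smul (q : Fin d → ℝ) (l : ℝ) :
    Fmat hΔ q + l • Δ = Fmat hΔ (q + l • hΔ.eigenvalues) := by
  have hdiag : (diagonal (RCLike.ofReal ∘ (q + l • hΔ.eigenvalues) : Fin d → ℂ))
      = diagonal (RCLike.ofReal ∘ q : Fin d → ℂ)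
        + l • diagonal (RCLike.ofReal ∘ hΔ.eigenvalues : Fin d → ℂ) := by
    have hfun : (RCLike.ofReal ∘ (q + l • hΔ.eigenvalues) : Fin d → ℂ)
        = (RCLike.ofReal ∘ q : Fin d → ℂ)
          + l • (RCLike.ofReal ∘ hΔ.eigenvalues : Fin d → ℂ) := by
      funext i
      simp [Function.comp, Complex.real_smul]
    rw [hfun, ← Matrix.diagonal_smul, Matrix.diagonal_add]
    rfl
  have key : Fmat hΔ (q + l • hΔ.eigenvalues)
      = Fmat hΔ q + l • Fmat hΔ hΔ.eigenvalues := by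
    rw [Fmat, Fmat, Fmat, hdiag, Matrix.mul_add, Matrix.add_mul, Matrix.mul_smul,
      Matrix.smul_mul]
  rw [key, ← Fmat_spec hΔ]

end glue

open Finset in
lemma auxcomb {d r : ℕ} (hd : 1 ≤ d) (hr : r ≤ d - 1) (v : Fin d → ℝ)
    (hsum : ∑ i, v i = 0) (hv : v ≠ 0)
    (hpos : (Finset.univ.filter fun i => 0 < v i).card ≤ r) :
    ∃ (q : Fin d → ℝ) (l : ℝ),
      (∀ i, 0 ≤ q i) ∧ (∑ i, q i = 1) ∧
      r < (Finset.univ.filter fun i => q i ≠ 0).card ∧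
      (∀ i, 0 ≤ q i + l * v i) ∧
      (Finset.univ.filter fun i => q i + l * v i ≠ 0).card ≤ r := by
  classical
  set N : Finset (Fin d) := Finset.univ.filter fun i => v i < 0 with hN
  set Z₀ : Finset (Fin d) := Finset.univ.filter fun i => v i = 0 with hZ₀
  set P : Finset (Fin d) := Finset.univ.filter fun i => 0 < v i with hP
  have hNne : N.Nonempty := by
    rw [Finset.nonempty_iff_ne_empty]
    intro h
    have hnonneg : ∀ i ∈ Finset.univ, 0 ≤ v i := by
      intro i _
      by_contra hc
      have : i ∈ N := by simp [hN, not_le.mp hc]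
      simp [h] at this
    have := (Finset.sum_eq_zero_iff_of_nonneg hnonneg).mp hsum
    exact hv (funext fun i => this i (Finset.mem_univ i))
  have hcardP : P.card + (Finset.univ.filter fun i => ¬ 0 < v i).card = d := by
    rw [Finset.card_filter_add_card_filter_not]
    simp
  have hsplit : (Finset.univ.filter fun i => ¬ 0 < v i) = N ∪ Z₀ := by
    ext i
    simp only [Finset.mem_filter, Finset.mem_univ, true_and, Finset.mem_union, hN, hZ₀,
      Finset.mem_filter]
    constructor
    · intro h; rcases (not_lt.mp h).lt_or_eq with h' | h'
      · exact Or.inl h'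
      · exact Or.inr h'
    · rintro (h | h)
      · exact not_lt.mpr h.le
      · exact not_lt.mpr h.le
  have hdisj : Disjoint N Z₀ := by
    rw [Finset.disjoint_left]
    intro i hi hi'
    simp only [hN, hZ₀, Finset.mem_filter, Finset.mem_univ, true_and] at hi hi'
    linarith [hi'.le]
  have hcardNZ : N.card + Z₀.card = d - P.card := by
    have h1 : (Finset.univ.filter fun i => ¬ 0 < v i).card = N.card + Z₀.card := by
      rw [hsplit, Finset.card_union_of_disjoint hdisj]
    omega
  -- choose Z ⊆ Z₀ of cardinality k = d - r - N.card
  have hk : d - r - N.card ≤ Z₀.card := by omega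
  obtain ⟨Z, hZsub, hZcard⟩ := Finset.exists_subset_card_eq hk
  have hZv : ∀ i ∈ Z, v i = 0 := by
    intro i hi
    have := hZsub hi
    simp only [hZ₀, Finset.mem_filter] at this
    exact this.2
  -- unnormalized weights
  set q₀ : Fin d → ℝ := fun i => if v i < 0 then -v i else if i ∈ Z then 0 else 1 with hq₀
  have hq₀nonneg : ∀ i, 0 ≤ q₀ i := by
    intro i
    simp only [hq₀]
    split_ifs with h1 h2
    · linarith
    · exact le_rfl
    · exact zero_le_one
  have hw0nonneg : ∀ i, 0 ≤ q₀ i + v i := by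
    intro i
    simp only [hq₀]
    split_ifs with h1 h2
    · linarith
    · have := hZv i h2; linarith [this.ge, this.le]
    · push_neg at h1; linarith
  set T : ℝ := ∑ i, q₀ i with hT
  have hTpos : 0 < T := by
    obtain ⟨i₀, hi₀⟩ := hNne
    simp only [hN, Finset.mem_filter] at hi₀
    refine Finset.sum_pos' (fun i _ => hq₀nonneg i) ⟨i₀, Finset.mem_univ i₀, ?_⟩
    simp only [hq₀, if_pos hi₀.2]
    linarith [hi₀.2]
  refine ⟨fun i => T⁻¹ * q₀ i, T⁻¹, fun i => mul_nonneg (inv_nonneg.mpr hTpos.le) (hq₀nonneg i), ?_, ?_, ?_, ?_⟩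
  · rw [← Finset.mul_sum, ← hT, inv_mul_cancel₀ hTpos.ne']
  · -- r < card of nonzero entries of q
    have hfe : (Finset.univ.filter fun i => T⁻¹ * q₀ i ≠ 0) = Finset.univ.filter fun i => i ∉ Z := by
      apply Finset.filter_congr
      intro i _
      constructor
      · intro h hmem
        apply h
        have hvi := hZv i hmem
        have hq0 : q₀ i = 0 := by
          simp only [hq₀]
          rw [if_neg (by rw [hvi]; exact lt_irrefl 0), if_pos hmem]
        rw [hq0, mul_zero]
      · intro h hc
        rcases mul_eq_zero.mp hc with h' | h'
        · exact (inv_ne_zero hTpos.ne') h'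
        · simp only [hq₀] at h'
          by_cases h1 : v i < 0
          · rw [if_pos h1] at h'; linarith
          · rw [if_neg h1] at h'
            by_cases h2 : i ∈ Z
            · exact h h2
            · rw [if_neg h2] at h'; norm_num at h'
    rw [hfe, Finset.filter_not, Finset.filter_mem_eq_inter, Finset.univ_inter,
      Finset.card_sdiff_of_subset (Finset.subset_univ Z), Finset.card_univ, Fintype.card_fin, hZcard]
    have hNcard : 1 ≤ N.card := Finset.card_pos.mpr hNne
    omega
  · intro i
    have := hw0nonneg i
    have : 0 ≤ T⁻¹ * (q₀ i + v i) := by positivity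
    calc (0:ℝ) ≤ T⁻¹ * (q₀ i + v i) := this
      _ = T⁻¹ * q₀ i + T⁻¹ * v i := by ring
  · have hfe : (Finset.univ.filter fun i => T⁻¹ * q₀ i + T⁻¹ * v i ≠ 0)
        = Finset.univ.filter fun i => ¬ (i ∈ Z ∨ v i < 0) := by
      apply Finset.filter_congr
      intro i _
      have hfac : T⁻¹ * q₀ i + T⁻¹ * v i = T⁻¹ * (q₀ i + v i) := by ring
      rw [hfac]
      constructor
      · intro h
        rintro (hmem | hneg)
        · apply h
          have hvi := hZv i hmem
          have hq0 : q₀ i = 0 := by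
            simp only [hq₀]
            rw [if_neg (by rw [hvi]; exact lt_irrefl 0), if_pos hmem]
          rw [hq0, hvi, add_zero, mul_zero]
        · apply h
          have hq0 : q₀ i = -v i := by
            simp only [hq₀]
            rw [if_pos hneg]
          rw [hq0]
          ring
      · intro h hc
        rcases mul_eq_zero.mp hc with h' | h'
        · exact (inv_ne_zero hTpos.ne') h'
        · push_neg at h
          simp only [hq₀] at h'
          by_cases h1 : v i < 0
          · linarith [h.2]
          · rw [if_neg h1] at h'
            by_cases h2 : i ∈ Z
            · exact h.1 h2
            · rw [if_neg h2] at h'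
              push_neg at h1; linarith
    rw [hfe]
    have hfe2 : (Finset.univ.filter fun i => ¬ (i ∈ Z ∨ v i < 0))
        = Finset.univ \ (Z ∪ N) := by
      ext i
      simp [hN, not_or]
    rw [hfe2, Finset.card_sdiff_of_subset (Finset.subset_univ _), Finset.card_univ, Fintype.card_fin,
      Finset.card_union_of_disjoint, hZcard]
    · have hNcard : 1 ≤ N.card := Finset.card_pos.mpr hNne
      omega
    · rw [Finset.disjoint_left]
      intro i hi hi'
      simp only [hN, Finset.mem_filter] at hi'
      have := hZv i hi
      linarith

theorem stmt18 {d r : ℕ} (hd : 2 ≤ d) (hr_lo : d / 2 ≤ r) (hr_hi : r ≤ d - 1) :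
    ∀ Δ : Matrix (Fin d) (Fin d) ℂ, Δ.IsHermitian → Δ.trace = 0 → Δ ≠ 0 →
      ∃ (ρ : Matrix (Fin d) (Fin d) ℂ) (l : ℝ),
        IsDensity ρ ∧ r < ρ.rank ∧
        IsDensity (ρ + l • Δ) ∧ (ρ + l • Δ).rank ≤ r := by
  intro Δ hΔ htr hne
  classical
  set e := hΔ.eigenvalues with he
  -- sum of eigenvalues is zero
  have htre : ((∑ i, e i : ℝ) : ℂ) = 0 := by
    rw [← Fmat_trace hΔ, ← Fmat_spec hΔ, htr]
  have hsum : ∑ i, e i = 0 := by exact_mod_cast htre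
  -- eigenvalues are not identically zero
  have henz : e ≠ 0 := by
    intro h
    apply hne
    rw [Fmat_spec hΔ, ← he, h, Fmat]
    have h0 : (diagonal (RCLike.ofReal ∘ (0 : Fin d → ℝ) : Fin d → ℂ)
        : Matrix (Fin d) (Fin d) ℂ) = 0 := by
      ext i j
      by_cases hij : i = j <;> simp [Matrix.diagonal, hij]
    rw [h0, Matrix.mul_zero, Matrix.zero_mul]
  -- choose sign s so that the positives of s • e are at most r
  have hcards : (Finset.univ.filter fun i => 0 < e i).card
      + (Finset.univ.filter fun i => e i < 0).card ≤ d := by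
    rw [← Finset.card_union_of_disjoint]
    · calc _ ≤ (Finset.univ : Finset (Fin d)).card := Finset.card_le_card (Finset.subset_univ _)
        _ = d := by simp
    · rw [Finset.disjoint_left]
      intro i hi hi'
      simp only [Finset.mem_filter, Finset.mem_univ, true_and] at hi hi'
      linarith
  obtain ⟨s, hs, hvpos⟩ : ∃ s : ℝ, (s = 1 ∨ s = -1) ∧
      (Finset.univ.filter fun i => 0 < s * e i).card ≤ r := by
    by_cases hc : (Finset.univ.filter fun i => 0 < e i).card ≤ r
    · exact ⟨1, Or.inl rfl, by simpa using hc⟩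
    · refine ⟨-1, Or.inr rfl, ?_⟩
      have hfe : (Finset.univ.filter fun i => 0 < (-1 : ℝ) * e i)
          = Finset.univ.filter fun i => e i < 0 := by
        apply Finset.filter_congr
        intro i _
        constructor <;> intro h <;> linarith
      rw [hfe]
      omega
  have hs0 : s ≠ 0 := by rcases hs with h | h <;> rw [h] <;> norm_num
  set v : Fin d → ℝ := fun i => s * e i with hv
  have hvs : ∑ i, v i = 0 := by
    simp only [hv, ← Finset.mul_sum, hsum, mul_zero]
  have hvne : v ≠ 0 := by
    intro h
    apply henz
    funext i
    have := congrFun h i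
    simp only [hv, Pi.zero_apply] at this ⊢
    rcases mul_eq_zero.mp this with h' | h'
    · exact absurd h' hs0
    · exact h'
  obtain ⟨q, l, hq0, hq1, hqrank, hw0, hwrank⟩ :=
    auxcomb (by omega) hr_hi v hvs hvne hvpos
  refine ⟨Fmat hΔ q, s * l, ⟨Fmat_posSemidef hΔ hq0, by rw [Fmat_trace hΔ, hq1]; norm_num⟩,
    ?_, ?_, ?_⟩
  · rw [Fmat_rank hΔ]; exact hqrank
  · have hEq : Fmat hΔ q + (s * l) • Δ = Fmat hΔ (fun i => q i + l * v i) := by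
      rw [Fmat_add_smul hΔ q (s * l)]
      apply congrArg
      funext i
      simp only [Pi.add_apply, Pi.smul_apply, smul_eq_mul, hv, ← he]
      ring
    rw [hEq]
    constructor
    · exact Fmat_posSemidef hΔ hw0
    · rw [Fmat_trace hΔ]
      have : ∑ i, (q i + l * v i) = 1 := by
        rw [Finset.sum_add_distrib, hq1, ← Finset.mul_sum, hvs, mul_zero, add_zero]
      rw [this]; norm_num
  · have hEq : Fmat hΔ q + (s * l) • Δ = Fmat hΔ (fun i => q i + l * v i) := by
      rw [Fmat_add_smul hΔ q (s * l)]
      apply congrArg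
      funext i
      simp only [Pi.add_apply, Pi.smul_apply, smul_eq_mul, hv, ← he]
      ring
    rw [hEq, Fmat_rank hΔ]
    exact hwrank
end
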